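/- arXiv:2005.14037 — 5 statements merged into one kernel-verified Lean document; each statement's English description precedes it below -/
import Mathlib

section
/- For integers n ≥ 4 and 2 ≤ k ≤ n−2, the partial sum of binomial coefficients satisfies Σ_{i=0}^{k} C(n−2, i) ≤ (n−2)^k / (k−1)!. -/
open Finset

private lemma aux_sum_choose (m : ℕ) :
    ∀ k, 2 ≤ k → k ≤ m →
      (k - 1).factorial * ∑ i ∈ Finset.range (k + 1), m.choose i ≤ m ^ k := by
  intro k hk2
  induction k, hk2 using Nat.le_induction with
  | base =>
    intro hm
    simp only [Nat.reduceSub, Nat.factorial_one, one_mul]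
    rw [Finset.sum_range_succ, Finset.sum_range_succ, Finset.sum_range_one,
      Nat.choose_zero_right, Nat.choose_one_right, Nat.choose_two_right]
    have hdvd : 2 ∣ m * (m - 1) := by
      rcases Nat.even_or_odd m with h | h
      · exact Dvd.dvd.mul_right h.two_dvd _
      · exact Dvd.dvd.mul_left (Nat.Odd.sub_odd h odd_one).two_dvd _
    obtain ⟨c, hc⟩ := hdvd
    rw [hc, Nat.mul_div_cancel_left _ (by norm_num)]
    have : 2 * (1 + m + c) ≤ 2 * m ^ 2 := by
      rw [mul_add, mul_add, ← hc]
      have h1 : 1 ≤ m - 1 := by omega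
      nlinarith [Nat.sub_add_cancel (by omega : 1 ≤ m)]
    omega
  | succ k hk2 ih =>
    intro hm
    have ihk := ih (by omega)
    simp only [Nat.add_sub_cancel]
    rw [Finset.sum_range_succ]
    set S := ∑ i ∈ Finset.range (k + 1), m.choose i with hS
    set c := m.choose (k + 1) with hc
    have hkfac : k.factorial = k * (k - 1).factorial := by
      have hk1 : k - 1 + 1 = k := by omega
      rw [← hk1, Nat.factorial_succ, hk1]
    have hdesc : (k + 1).factorial * c = m.descFactorial (k + 1) :=
      (Nat.descFactorial_eq_factorial_mul_choose m (k + 1)).symm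
    have h4 : m.descFactorial (k + 1) ≤ m ^ (k + 1) := Nat.descFactorial_le_pow _ _
    have hkey : (k + 1) * (k.factorial * (S + c)) ≤ (k + 1) * m ^ (k + 1) := by
      calc (k + 1) * (k.factorial * (S + c))
          = (k + 1) * k * ((k - 1).factorial * S) + (k + 1).factorial * c := by
            rw [Nat.factorial_succ, hkfac]; ring
        _ ≤ (k + 1) * k * m ^ k + m ^ (k + 1) := by
            rw [hdesc]
            exact Nat.add_le_add (Nat.mul_le_mul_left _ ihk) h4
        _ ≤ (k + 1) * m ^ (k + 1) := by
            have h6 : (k + 1) * k * m ^ k ≤ k * m ^ (k + 1) := by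
              calc (k + 1) * k * m ^ k ≤ m * k * m ^ k :=
                    Nat.mul_le_mul_right _ (Nat.mul_le_mul_right _ hm)
                _ = k * m ^ (k + 1) := by rw [pow_succ]; ring
            have h7 : (k + 1) * m ^ (k + 1) = k * m ^ (k + 1) + m ^ (k + 1) := by ring
            rw [h7]
            exact Nat.add_le_add_right h6 _
    exact Nat.le_of_mul_le_mul_left hkey (by omega)

/-- For integers `n ≥ 4` and `2 ≤ k ≤ n - 2`, the partial sum of binomial
coefficients satisfies `∑_{i=0}^{k} C(n-2, i) ≤ (n-2)^k / (k-1)!`. -/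
theorem sum_binomial_le_pow_div_factorial (n k : ℕ) (hn : 4 ≤ n) (hk : 2 ≤ k)
    (hkn : k ≤ n - 2) :
    ((∑ i ∈ Finset.range (k + 1), (n - 2).choose i : ℕ) : ℝ) ≤
      ((n - 2 : ℕ) : ℝ) ^ k / (Nat.factorial (k - 1) : ℝ) := by
  have h := aux_sum_choose (n - 2) k hk hkn
  rw [le_div_iff₀ (by positivity)]
  calc ((∑ i ∈ Finset.range (k + 1), (n - 2).choose i : ℕ) : ℝ) * (Nat.factorial (k - 1) : ℝ)
      = (((k - 1).factorial * ∑ i ∈ Finset.range (k + 1), (n - 2).choose i : ℕ) : ℝ) := by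
        push_cast; ring
    _ ≤ (((n - 2) ^ k : ℕ) : ℝ) := by exact_mod_cast h
    _ = ((n - 2 : ℕ) : ℝ) ^ k := by push_cast; ring
end

section
/- The skeleton produced by the stable PC-like algorithm is order independent: for any two orderings of the variables, the sample version of the stable PC-like algorithm (which fixes the adjacency sets a_H(v) at the start of each level i and removes recorded edges only when moving to level i+1) deletes exactly the same set of edges, hence outputs the same skeleton. -/
open Finset

variable {V : Type*} [DecidableEq V]

/-- One edge-examination step of the stable PC-like algorithm at level `i` with *frozen*
adjacency sets `aH` and CI oracle `I`: the ordered pair `p = (u, v)` is examined, and the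
edge `{u, v}` is removed from the current edge set `E` iff `u ∈ aH v` and there exists
`S ⊆ aH u \ {v}` with `|S| = i` and `I u v S`.  The frozen sets `aH` are *not* updated. -/
def stableStep (I : V → V → Finset V → Bool) (aH : V → Finset V) (i : ℕ)
    (E : Finset (Sym2 V)) (p : V × V) : Finset (Sym2 V) :=
  if p.1 ∈ aH p.2 ∧
      (((aH p.1).erase p.2).powerset.filter (fun S => S.card = i ∧ I p.1 p.2 S)).Nonempty
  then E.erase s(p.1, p.2) else E

lemma stableStep_comm (I : V → V → Finset V → Bool) (aH : V → Finset V) (i : ℕ)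
    (E : Finset (Sym2 V)) (p q : V × V) :
    stableStep I aH i (stableStep I aH i E p) q =
    stableStep I aH i (stableStep I aH i E q) p := by
  unfold stableStep
  split <;> split <;> try rfl
  ext e; simp [Finset.mem_erase]; tauto

/-- The skeleton produced by the stable PC-like algorithm is order
independent: at each level `i`, with adjacency sets frozen at the start of the level, any
two orderings of the (ordered) vertex pairs — i.e. any two lists of pairs that are
permutations of one another — lead to exactly the same set of deleted edges, hence to the
same skeleton. -/
theorem stable_pc_order_independent (I : V → V → Finset V → Bool)
    (aH : V → Finset V) (i : ℕ) (E : Finset (Sym2 V))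
    (L₁ L₂ : List (V × V)) (h : L₁.Perm L₂) :
    L₁.foldl (stableStep I aH i) E = L₂.foldl (stableStep I aH i) E := by
  induction h generalizing E with
  | nil => rfl
  | cons x _ ih => simp [ih]
  | swap x y l => simp [stableStep_comm]
  | trans _ _ ih₁ ih₂ => exact (ih₁ E).trans (ih₂ E)
end

section
/- In an LWF chain graph G, if u → w ← v is an induced subgraph (a minimal complex of length one) and S is any set c-separating u and v with w ∉ S, then S ∪ {w} does not c-separate u and v. -/
/-- A mixed graph with directed edges `Dir` and (symmetric) undirected edges `Undir`. -/
structure MixedGraph (V : Type*) where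
  Dir : V → V → Prop
  Undir : V → V → Prop
  undir_symm : ∀ {u v : V}, Undir u v → Undir v u

namespace MixedGraph

variable {V : Type*} (G : MixedGraph V)

/-- A partially directed (semi-directed) cycle: distinct vertices `v 0, …, v (n-1)`, `n ≥ 3`,
`v n = v 0`, each consecutive pair joined by an undirected or directed edge, and at least one
edge directed. -/
def HasPDCycle : Prop :=
  ∃ (n : ℕ) (v : ℕ → V), 3 ≤ n ∧
    (∀ i j, i < n → j < n → v i = v j → i = j) ∧
    v n = v 0 ∧
    (∀ i, i < n → G.Undir (v i) (v (i + 1)) ∨ G.Dir (v i) (v (i + 1))) ∧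
    (∃ j, j < n ∧ G.Dir (v j) (v (j + 1)))

/-- A chain graph is a mixed graph with no partially directed cycle. -/
def IsChainGraph : Prop := ¬ G.HasPDCycle

/-- Two vertices lie in the same chain component iff they are connected in the undirected
graph obtained by removing all directed edges. -/
def SameChainComp (u v : V) : Prop :=
  Relation.ReflTransGen (fun a b => G.Undir a b) u v

end MixedGraph

namespace MixedGraph

variable {V : Type*} (G : MixedGraph V)

/-- Two vertices are adjacent: joined by a directed or undirected edge. -/
def Adj (u v : V) : Prop :=
  G.Dir u v ∨ G.Dir v u ∨ G.Undir u v ∨ G.Undir v u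

/-- The boundary of a vertex `a`: its parents and neighbors. -/
def bd (a : V) : Set V := {x | G.Dir x a ∨ G.Undir x a}

/-- A set `A` is ancestral if `bd a ⊆ A` for every `a ∈ A`. -/
def Ancestral (A : Set V) : Prop := ∀ a ∈ A, G.bd a ⊆ A

/-- The smallest ancestral set containing `A`: the intersection of all ancestral sets
containing `A`. -/
def An (A : Set V) : Set V := ⋂₀ {B : Set V | G.Ancestral B ∧ A ⊆ B}

/-- `a` and `b` lie in the same chain component of the subgraph induced on `W`:
connected by undirected edges inside `W`. -/
def SameCompIn (W : Set V) : V → V → Prop :=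
  Relation.ReflTransGen (fun a b => a ∈ W ∧ b ∈ W ∧ (G.Undir a b ∨ G.Undir b a))

/-- Edges of the moral graph of the subgraph induced on `W`: `x` and `y` are joined iff
they are adjacent in the induced subgraph, or they have children (heads of directed edges)
in a common chain component of the induced subgraph. -/
def moralEdge (W : Set V) (x y : V) : Prop :=
  x ∈ W ∧ y ∈ W ∧
    (G.Adj x y ∨
      ∃ γ₁ γ₂, γ₁ ∈ W ∧ γ₂ ∈ W ∧ G.SameCompIn W γ₁ γ₂ ∧ G.Dir x γ₁ ∧ G.Dir y γ₂)

/-- Reachability by a path avoiding `S` (no visited vertex after the start lies in `S`). -/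
def ReachAvoid (R : V → V → Prop) (S : Set V) : V → V → Prop :=
  Relation.ReflTransGen (fun a b => R a b ∧ b ∉ S)

/-- c-separation in an LWF chain graph: `S` c-separates `u` from `v` iff `S` separates
`u` and `v` in the moral graph of the smallest ancestral set containing `{u, v} ∪ S`. -/
def CSep (u v : V) (S : Set V) : Prop :=
  ¬ ReachAvoid (G.moralEdge (G.An ({u, v} ∪ S))) S u v

end MixedGraph

/-- In an LWF chain graph `G`, if `u → w ← v` is an induced subgraph
(a minimal complex of length one, so in particular `u` and `v` are nonadjacent) and `S`
is any set c-separating `u` and `v` with `w ∉ S`, then `S ∪ {w}` does not c-separate `u`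
and `v`. -/
theorem collider_conditioning_connects {V : Type*} (G : MixedGraph V)
    (hCG : G.IsChainGraph) (u v w : V)
    (huv : u ≠ v) (huw : u ≠ w) (hvw : v ≠ w)
    (h1 : G.Dir u w) (h2 : G.Dir v w) (hna : ¬ G.Adj u v)
    (S : Set V) (hwS : w ∉ S) (huS : u ∉ S) (hvS : v ∉ S)
    (hsep : G.CSep u v S) :
    ¬ G.CSep u v (S ∪ {w}) := by
  intro hc
  apply hc
  set A : Set V := {u, v} ∪ (S ∪ {w}) with hA
  have hsub : A ⊆ G.An A := by
    intro x hx B hB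
    exact hB.2 hx
  have hu : u ∈ G.An A := hsub (Or.inl (Or.inl rfl))
  have hv : v ∈ G.An A := hsub (Or.inl (Or.inr rfl))
  have hw : w ∈ G.An A := hsub (Or.inr (Or.inr rfl))
  refine Relation.ReflTransGen.single ⟨⟨hu, hv, Or.inr ⟨w, w, hw, hw, Relation.ReflTransGen.refl, h1, h2⟩⟩, ?_⟩
  rintro (h | h)
  · exact hvS h
  · exact hvw h
end

section
/- Correctness of the BFS-based minimal separator refinement: in an undirected graph, if Z' separates nonadjacent vertices A and B, and Z'' is the subset of Z' consisting of those vertices reachable from A by a path whose intermediate vertices avoid Z', then Z'' still separates A and B. -/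
/-- `Z` separates `A` and `B` in the graph `G`: every walk from `A` to `B` contains a
vertex of `Z`. -/
def Separates {V : Type*} (G : SimpleGraph V) (A B : V) (Z : Set V) : Prop :=
  ∀ p : G.Walk A B, ∃ x ∈ p.support, x ∈ Z

/-- The subset of `W` reachable from `A` by a path with no intermediate vertex in `W`. -/
def reachPart {V : Type*} (G : SimpleGraph V) (A : V) (W : Set V) : Set V :=
  {z ∈ W | ∃ p : G.Walk A z, ∀ x ∈ p.support, x ≠ A → x ≠ z → x ∉ W}

private lemma first_hit {V : Type*} {G : SimpleGraph V} {B : V} (Z' : Set V) :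
    ∀ {u : V} (p : G.Walk u B), (∃ x ∈ p.support, x ∈ Z') →
      ∃ z ∈ p.support, z ∈ Z' ∧ ∃ q : G.Walk u z, ∀ y ∈ q.support, y ≠ z → y ∉ Z' := by
  intro u p hp
  induction p with
  | nil =>
    obtain ⟨x, hx, hxZ⟩ := hp
    simp only [SimpleGraph.Walk.support_nil, List.mem_singleton] at hx
    subst hx
    exact ⟨x, by simp, hxZ, SimpleGraph.Walk.nil, by simp⟩
  | cons h' p' ih =>
    rename_i u v _
    by_cases hu : u ∈ Z'
    · exact ⟨u, by simp, hu, SimpleGraph.Walk.nil, by simp⟩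
    · obtain ⟨x, hx, hxZ⟩ := hp
      rw [SimpleGraph.Walk.support_cons, List.mem_cons] at hx
      rcases hx with rfl | hx
      · exact absurd hxZ hu
      · obtain ⟨z, hzp, hzZ, q, hq⟩ := ih ⟨x, hx, hxZ⟩
        refine ⟨z, by simp [hzp], hzZ, SimpleGraph.Walk.cons h' q, ?_⟩
        intro y hy hyz
        rw [SimpleGraph.Walk.support_cons, List.mem_cons] at hy
        rcases hy with rfl | hy
        · exact hu
        · exact hq y hy hyz

/-- Correctness of the BFS-based minimal-separator refinement: if `Z'`
separates the nonadjacent vertices `A` and `B`, and `Z''` is the subset of `Z'` consisting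
of those vertices reachable from `A` by a path whose intermediate vertices avoid `Z'`,
then `Z''` still separates `A` and `B`. -/
theorem bfs_refinement_separates {V : Type*} (G : SimpleGraph V) (A B : V)
    (hAB : ¬ G.Adj A B) (Z' : Set V) (hsep : Separates G A B Z') :
    Separates G A B (reachPart G A Z') := by
  intro p
  obtain ⟨z, hzp, hzZ, q, hq⟩ := first_hit Z' p (hsep p)
  exact ⟨z, hzp, hzZ, q, fun y hy _ hyz => hq y hy hyz⟩
end

section
/- Double BFS yields a minimal separator: in an undirected graph with Z' separating nonadjacent A and B, let Z'' be the vertices of Z' reachable from A avoiding other vertices of Z' (as intermediates), and let Z be the vertices of Z'' reachable from B avoiding other vertices of Z'' (as intermediates). Then Z separates A and B, and no proper subset of Z separates A and B. -/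
/-- First vertex of a walk lying in a set `S`. -/
lemma firstHit {V : Type*} {G : SimpleGraph V} {A B : V} (p : G.Walk A B) (S : Set V)
    (h : ∃ x ∈ p.support, x ∈ S) :
    ∃ z, z ∈ S ∧ z ∈ p.support ∧ ∃ q : G.Walk A z, ∀ x ∈ q.support, x ≠ z → x ∉ S := by
  induction p with
  | nil =>
    obtain ⟨x, hx, hxS⟩ := h
    simp only [SimpleGraph.Walk.support_nil, List.mem_singleton] at hx
    subst hx
    exact ⟨x, hxS, by simp, SimpleGraph.Walk.nil, by simp⟩
  | @cons u v w huv p ih =>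
    by_cases hu : u ∈ S
    · exact ⟨u, hu, by simp, SimpleGraph.Walk.nil, by simp⟩
    · obtain ⟨x, hx, hxS⟩ := h
      rw [SimpleGraph.Walk.support_cons, List.mem_cons] at hx
      have hx' : x ∈ p.support := by
        rcases hx with h1 | h2
        · exact absurd (h1 ▸ hxS) hu
        · exact h2
      obtain ⟨z, hzS, hzsup, q, hq⟩ := ih ⟨x, hx', hxS⟩
      refine ⟨z, hzS, by simp [hzsup], q.cons huv, ?_⟩
      intro y hy hyz
      rw [SimpleGraph.Walk.support_cons, List.mem_cons] at hy
      rcases hy with rfl | hy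
      · exact hu
      · exact hq y hy hyz

/-- Double BFS yields a minimal separator: if `Z'` separates the distinct
nonadjacent vertices `A` and `B` (with `A, B ∉ Z'`), let `Z'' = reachPart G A Z'` and
`Z = reachPart G B Z''`. Then `Z` separates `A` and `B`, and no proper subset of `Z`
separates `A` and `B`. -/
theorem double_bfs_minimal_separator {V : Type*} (G : SimpleGraph V) (A B : V)
    (hne : A ≠ B) (hAB : ¬ G.Adj A B) (Z' : Set V)
    (hA : A ∉ Z') (hB : B ∉ Z') (hsep : Separates G A B Z') :
    Separates G A B (reachPart G B (reachPart G A Z')) ∧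
    ∀ W : Set V, W ⊂ reachPart G B (reachPart G A Z') → ¬ Separates G A B W := by
  set Z'' := reachPart G A Z' with hZ''def
  set Z := reachPart G B Z'' with hZdef
  have hZ''sub : Z'' ⊆ Z' := fun z hz => hz.1
  have hZsub : Z ⊆ Z'' := fun z hz => hz.1
  have hsep'' : Separates G A B Z'' := by
    intro p
    obtain ⟨z, hzS, hzsup, q, hq⟩ := firstHit p Z' (hsep p)
    exact ⟨z, hzsup, hzS, q, fun x hx _ hxz => hq x hx hxz⟩
  have hsepZ : Separates G A B Z := by
    intro p
    obtain ⟨x, hx, hxZ''⟩ := hsep'' p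
    have hx' : x ∈ p.reverse.support := by simpa using hx
    obtain ⟨z, hzS, hzsup, q, hq⟩ := firstHit p.reverse Z'' ⟨x, hx', hxZ''⟩
    refine ⟨z, by simpa using hzsup, hzS, q, fun y hy _ hyz => hq y hy hyz⟩
  refine ⟨hsepZ, ?_⟩
  intro W hW hsepW
  obtain ⟨z, hzZ, hzW⟩ := Set.exists_of_ssubset hW
  obtain ⟨hzZ'', q, hq⟩ := hzZ
  obtain ⟨hzZ', p, hp⟩ := hzZ''
  have hWZ : W ⊆ Z := hW.1
  have hAW : A ∉ W := fun h => hA (hZ''sub (hZsub (hWZ h)))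
  have hBW : B ∉ W := fun h => hB (hZ''sub (hZsub (hWZ h)))
  obtain ⟨x, hx, hxW⟩ := hsepW (p.append q.reverse)
  rw [SimpleGraph.Walk.mem_support_append_iff] at hx
  rcases hx with hx | hx
  · by_cases hxA : x = A
    · exact hAW (hxA ▸ hxW)
    by_cases hxz : x = z
    · exact hzW (hxz ▸ hxW)
    exact hp x hx hxA hxz (hZ''sub (hZsub (hWZ hxW)))
  · rw [SimpleGraph.Walk.support_reverse, List.mem_reverse] at hx
    by_cases hxB : x = B
    · exact hBW (hxB ▸ hxW)
    by_cases hxz : x = z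
    · exact hzW (hxz ▸ hxW)
    exact hq x hx hxB hxz (hZsub (hWZ hxW))
end
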